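/- Assume the set A of action names is finite. Then there exists a finite axiom system over CCS extended with the left merge operator ⌊ and the communication merge operator | that is sound and ground-complete modulo bisimilarity ∼_B (Bergstra–Klop theorem). -/

import Mathlib

/-- Actions: names, co-names and the silent action τ. -/
inductive Act (A : Type) : Type
  | name : A → Act A
  | coname : A → Act A
  | tau : Act A
  deriving DecidableEq

/-- Complementation of actions (`co` of τ is τ; it is only ever used on non-τ actions). -/
def Act.co {A : Type} : Act A → Act A
  | .name a => .coname a
  | .coname a => .name a
  | .tau => .tau

/-- Terms of CCS extended with the left merge `⌊` and the communication merge `|`. -/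
inductive Tm (A : Type) : Type
  | nil : Tm A
  | var : ℕ → Tm A
  | pre : Act A → Tm A → Tm A
  | plus : Tm A → Tm A → Tm A
  | par : Tm A → Tm A → Tm A
  | lmerge : Tm A → Tm A → Tm A
  | cmerge : Tm A → Tm A → Tm A

/-- The SOS transition relation of CCS with left merge and communication merge. -/
inductive Step {A : Type} : Tm A → Act A → Tm A → Prop
  | pre (μ : Act A) (t : Tm A) : Step (.pre μ t) μ t
  | plusL {t u t' : Tm A} {μ : Act A} : Step t μ t' → Step (.plus t u) μ t'
  | plusR {t u u' : Tm A} {μ : Act A} : Step u μ u' → Step (.plus t u) μ u'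
  | parL {t u t' : Tm A} {μ : Act A} : Step t μ t' → Step (.par t u) μ (.par t' u)
  | parR {t u u' : Tm A} {μ : Act A} : Step u μ u' → Step (.par t u) μ (.par t u')
  | comm {t u t' u' : Tm A} {α : Act A} : α ≠ Act.tau → Step t α t' → Step u α.co u' →
      Step (.par t u) .tau (.par t' u')
  | lmerge {t u t' : Tm A} {μ : Act A} : Step t μ t' → Step (.lmerge t u) μ (.par t' u)
  | cmerge {t u t' u' : Tm A} {α : Act A} : α ≠ Act.tau → Step t α t' → Step u α.co u' →
      Step (.cmerge t u) .tau (.par t' u')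

/-- A term is closed (a process) if no variable occurs in it. -/
def Closed {A : Type} : Tm A → Prop
  | .nil => True
  | .var _ => False
  | .pre _ t => Closed t
  | .plus t u => Closed t ∧ Closed u
  | .par t u => Closed t ∧ Closed u
  | .lmerge t u => Closed t ∧ Closed u
  | .cmerge t u => Closed t ∧ Closed u

/-- Applying a substitution to a term. -/
def subst {A : Type} (σ : ℕ → Tm A) : Tm A → Tm A
  | .nil => .nil
  | .var x => σ x
  | .pre μ t => .pre μ (subst σ t)
  | .plus t u => .plus (subst σ t) (subst σ u)
  | .par t u => .par (subst σ t) (subst σ u)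
  | .lmerge t u => .lmerge (subst σ t) (subst σ u)
  | .cmerge t u => .cmerge (subst σ t) (subst σ u)

/-- A substitution is closed if all its values are closed. -/
def ClosedSubst {A : Type} (σ : ℕ → Tm A) : Prop := ∀ x, Closed (σ x)

/-- `R` is a bisimulation (symmetric, with the transfer property). -/
def IsBisim {A : Type} (R : Tm A → Tm A → Prop) : Prop :=
  (∀ p q, R p q → R q p) ∧
  (∀ p q μ p', R p q → Step p μ p' → ∃ q', Step q μ q' ∧ R p' q')

/-- Bisimilarity: the largest bisimulation. -/
def Bisim {A : Type} (p q : Tm A) : Prop := ∃ R, IsBisim R ∧ R p q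

/-- Equations are pairs of terms. -/
abbrev Eqn (A : Type) := Tm A × Tm A

/-- Derivability in equational logic from the axiom system `E`. -/
inductive Deriv {A : Type} (E : Set (Eqn A)) : Tm A → Tm A → Prop
  | ax {t u : Tm A} (σ : ℕ → Tm A) (h : (t, u) ∈ E) : Deriv E (subst σ t) (subst σ u)
  | refl (t : Tm A) : Deriv E t t
  | symm {t u : Tm A} (h : Deriv E t u) : Deriv E u t
  | trans {t u v : Tm A} (h₁ : Deriv E t u) (h₂ : Deriv E u v) : Deriv E t v
  | pre (μ : Act A) {t u : Tm A} (h : Deriv E t u) : Deriv E (.pre μ t) (.pre μ u)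
  | plus {t u t' u' : Tm A} (h₁ : Deriv E t u) (h₂ : Deriv E t' u') :
      Deriv E (.plus t t') (.plus u u')
  | par {t u t' u' : Tm A} (h₁ : Deriv E t u) (h₂ : Deriv E t' u') :
      Deriv E (.par t t') (.par u u')
  | lmerge {t u t' u' : Tm A} (h₁ : Deriv E t u) (h₂ : Deriv E t' u') :
      Deriv E (.lmerge t t') (.lmerge u u')
  | cmerge {t u t' u' : Tm A} (h₁ : Deriv E t u) (h₂ : Deriv E t' u') :
      Deriv E (.cmerge t t') (.cmerge u u')

/-- An equation is sound modulo `sim` if all its closed instances are related by `sim`. -/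
def EqnSound {A : Type} (sim : Tm A → Tm A → Prop) (t u : Tm A) : Prop :=
  ∀ σ : ℕ → Tm A, ClosedSubst σ → sim (subst σ t) (subst σ u)

/-- An axiom system is sound modulo `sim` if each of its equations is. -/
def SystemSound {A : Type} (sim : Tm A → Tm A → Prop) (E : Set (Eqn A)) : Prop :=
  ∀ e ∈ E, EqnSound sim e.1 e.2

/-- An axiom system is ground-complete modulo `sim` if it derives every valid
closed equation. -/
def GroundComplete {A : Type} (sim : Tm A → Tm A → Prop) (E : Set (Eqn A)) : Prop :=
  ∀ p q : Tm A, Closed p → Closed q → sim p q → Deriv E p q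

/-! Bergstra and Klop axiomatise `+` and `0` by A1–A4 and eliminate `‖` by the expansion law
`x ‖ y = x ⌊ y + y ⌊ x + x | y`, with distributivity and prefix laws for `⌊` and `|`. The prefix
law for `|` is a scheme over pairs of actions, hence finite when `A` is finite. Every axiom except
the expansion law has closed instances whose two sides have the same transitions.

Read from left to right the axioms turn every closed term `p` into a sum `Σ μᵢ.sᵢ` of closed terms
with `depth sᵢ < depth p`, and this sum is bisimilar to `p`. The summands of two bisimilar such sums
match up to bisimilarity, so by induction on depth they are provably equal, and then so are the
sums, by idempotence and commutativity of `+`. -/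

open Tm

section
variable {A : Type}

theorem Bisim.exists_step {p q p' : Tm A} {μ : Act A} (h : Bisim p q) (hs : Step p μ p') :
    ∃ q', Step q μ q' ∧ Bisim p' q' := by
  obtain ⟨R, hR, hpq⟩ := h
  obtain ⟨q', hq', hr⟩ := hR.2 p q μ p' hpq hs
  exact ⟨q', hq', R, hR, hr⟩

theorem Bisim.refl (p : Tm A) : Bisim p p :=
  ⟨Eq, ⟨fun _ _ h => h.symm, fun _ _ _ p' h hs => ⟨p', h ▸ hs, rfl⟩⟩, rfl⟩

theorem Bisim.symm {p q : Tm A} (h : Bisim p q) : Bisim q p := by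
  obtain ⟨R, hR, hpq⟩ := h
  exact ⟨R, hR, hR.1 _ _ hpq⟩

theorem Bisim.trans {p q r : Tm A} (h₁ : Bisim p q) (h₂ : Bisim q r) : Bisim p r := by
  refine ⟨fun a c => ∃ b, Bisim a b ∧ Bisim b c, ⟨?_, ?_⟩, q, h₁, h₂⟩
  · rintro a c ⟨b, hab, hbc⟩
    exact ⟨b, hbc.symm, hab.symm⟩
  · rintro a c μ a' ⟨b, hab, hbc⟩ hs
    obtain ⟨b', hbs, hab'⟩ := hab.exists_step hs
    obtain ⟨c', hcs, hbc'⟩ := hbc.exists_step hbs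
    exact ⟨c', hcs, b', hab', hbc'⟩

theorem bisim_iff {p q : Tm A} :
    Bisim p q ↔ (∀ μ p', Step p μ p' → ∃ q', Step q μ q' ∧ Bisim p' q') ∧
      (∀ μ q', Step q μ q' → ∃ p', Step p μ p' ∧ Bisim p' q') := by
  refine ⟨fun h => ⟨fun _ _ => h.exists_step, fun _ _ hs => ?_⟩, fun ⟨hpq, hqp⟩ => ?_⟩
  · obtain ⟨p', hp', h'⟩ := h.symm.exists_step hs
    exact ⟨p', hp', h'.symm⟩
  · refine ⟨fun a b => (a = p ∧ b = q) ∨ (a = q ∧ b = p) ∨ Bisim a b, ⟨?_, ?_⟩, .inl ⟨rfl, rfl⟩⟩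
    · rintro a b (⟨rfl, rfl⟩ | ⟨rfl, rfl⟩ | h)
      exacts [.inr (.inl ⟨rfl, rfl⟩), .inl ⟨rfl, rfl⟩, .inr (.inr h.symm)]
    · rintro a b μ a' (⟨rfl, rfl⟩ | ⟨rfl, rfl⟩ | h) hs
      · obtain ⟨q', hq', h'⟩ := hpq μ a' hs
        exact ⟨q', hq', .inr (.inr h')⟩
      · obtain ⟨p', hp', h'⟩ := hqp μ a' hs
        exact ⟨p', hp', .inr (.inr h'.symm)⟩
      · obtain ⟨b', hb', h'⟩ := h.exists_step hs
        exact ⟨b', hb', .inr (.inr h')⟩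

theorem bisim_of_step_iff {p q : Tm A} (h : ∀ μ p', Step p μ p' ↔ Step q μ p') : Bisim p q :=
  bisim_iff.mpr ⟨fun μ p' hs => ⟨p', (h μ p').mp hs, .refl _⟩,
    fun μ q' hs => ⟨q', (h μ q').mpr hs, .refl _⟩⟩

theorem Act.co_co (μ : Act A) : μ.co.co = μ := by cases μ <;> rfl

theorem Act.co_ne_tau {μ : Act A} (h : μ ≠ .tau) : μ.co ≠ .tau := by
  cases μ <;> simp_all [Act.co]

theorem not_step_nil {μ : Act A} {p : Tm A} : ¬ Step nil μ p := nofun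

theorem not_step_var {x : ℕ} {μ : Act A} {p : Tm A} : ¬ Step (var x) μ p := nofun

theorem step_pre_iff {μ ν : Act A} {t p : Tm A} : Step (pre ν t) μ p ↔ μ = ν ∧ p = t :=
  ⟨by rintro ⟨⟩; exact ⟨rfl, rfl⟩, by rintro ⟨rfl, rfl⟩; exact .pre _ _⟩

theorem step_plus_iff {μ : Act A} {t u p : Tm A} :
    Step (plus t u) μ p ↔ Step t μ p ∨ Step u μ p :=
  ⟨fun | .plusL h => .inl h | .plusR h => .inr h, by rintro (h | h); exacts [.plusL h, .plusR h]⟩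

theorem step_lmerge_iff {μ : Act A} {t u p : Tm A} :
    Step (lmerge t u) μ p ↔ ∃ t', Step t μ t' ∧ p = par t' u :=
  ⟨fun | .lmerge h => ⟨_, h, rfl⟩, by rintro ⟨t', h, rfl⟩; exact .lmerge h⟩

theorem step_cmerge_iff {μ : Act A} {t u p : Tm A} :
    Step (cmerge t u) μ p ↔
      μ = .tau ∧ ∃ α t' u', α ≠ .tau ∧ Step t α t' ∧ Step u α.co u' ∧ p = par t' u' :=
  ⟨fun | .cmerge hα ht hu => ⟨rfl, _, _, _, hα, ht, hu, rfl⟩,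
    by rintro ⟨rfl, α, t', u', hα, ht, hu, rfl⟩; exact .cmerge hα ht hu⟩

theorem bisim_par_comm (a b : Tm A) : Bisim (par a b) (par b a) := by
  refine ⟨fun p q => ∃ a b, p = par a b ∧ q = par b a, ⟨?_, ?_⟩, a, b, rfl, rfl⟩
  · rintro p q ⟨a, b, rfl, rfl⟩
    exact ⟨b, a, rfl, rfl⟩
  · rintro p q μ p' ⟨a, b, rfl, rfl⟩ hs
    cases hs with
    | parL h => exact ⟨_, .parR h, _, _, rfl, rfl⟩
    | parR h => exact ⟨_, .parL h, _, _, rfl, rfl⟩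
    | comm hα ha hb =>
      exact ⟨_, .comm (Act.co_ne_tau hα) hb (by rwa [Act.co_co]), _, _, rfl, rfl⟩

theorem Bisim.par {a b c d : Tm A} (h₁ : Bisim a b) (h₂ : Bisim c d) :
    Bisim (par a c) (par b d) := by
  refine ⟨fun p q => ∃ a b c d, Bisim a b ∧ Bisim c d ∧ p = .par a c ∧ q = .par b d,
    ⟨?_, ?_⟩, a, b, c, d, h₁, h₂, rfl, rfl⟩
  · rintro p q ⟨a, b, c, d, h₁, h₂, rfl, rfl⟩
    exact ⟨b, a, d, c, h₁.symm, h₂.symm, rfl, rfl⟩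
  · rintro p q μ p' ⟨a, b, c, d, h₁, h₂, rfl, rfl⟩ hs
    cases hs with
    | parL ha =>
      obtain ⟨b', hb, h₁'⟩ := h₁.exists_step ha
      exact ⟨_, .parL hb, _, _, _, _, h₁', h₂, rfl, rfl⟩
    | parR hc =>
      obtain ⟨d', hd, h₂'⟩ := h₂.exists_step hc
      exact ⟨_, .parR hd, _, _, _, _, h₁, h₂', rfl, rfl⟩
    | comm hα ha hc =>
      obtain ⟨b', hb, h₁'⟩ := h₁.exists_step ha
      obtain ⟨d', hd, h₂'⟩ := h₂.exists_step hc
      exact ⟨_, .comm hα hb hd, _, _, _, _, h₁', h₂', rfl, rfl⟩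

theorem bisim_par_expand (a b : Tm A) :
    Bisim (par a b) (plus (plus (lmerge a b) (lmerge b a)) (cmerge a b)) := by
  refine bisim_iff.mpr ⟨?_, ?_⟩
  · intro μ p' hs
    cases hs with
    | parL h => exact ⟨_, .plusL (.plusL (.lmerge h)), .refl _⟩
    | parR h => exact ⟨_, .plusL (.plusR (.lmerge h)), bisim_par_comm _ _⟩
    | comm hα ha hb => exact ⟨_, .plusR (.cmerge hα ha hb), .refl _⟩
  · intro μ q' hs
    rcases step_plus_iff.mp hs with hs | hs
    · rcases step_plus_iff.mp hs with hs | hs <;> obtain ⟨t', h, rfl⟩ := step_lmerge_iff.mp hs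
      · exact ⟨_, .parL h, .refl _⟩
      · exact ⟨_, .parR h, bisim_par_comm _ _⟩
    · obtain ⟨rfl, α, a', b', hα, ha, hb, rfl⟩ := step_cmerge_iff.mp hs
      exact ⟨_, .comm hα ha hb, .refl _⟩

instance Act.finite [Finite A] : Finite (Act A) :=
  Finite.of_surjective (fun x : Option (A ⊕ A) => x.elim .tau (Sum.elim .name .coname))
    (by rintro (a | a | _); exacts [⟨some (.inl a), rfl⟩, ⟨some (.inr a), rfl⟩, ⟨none, rfl⟩])

variable (A) in
def baseAxioms : Set (Eqn A) :=
  { (plus (var 0) (var 1), plus (var 1) (var 0)),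
    (plus (plus (var 0) (var 1)) (var 2), plus (var 0) (plus (var 1) (var 2))),
    (plus (var 0) (var 0), var 0),
    (plus (var 0) nil, var 0),
    (par (var 0) (var 1),
      plus (plus (lmerge (var 0) (var 1)) (lmerge (var 1) (var 0))) (cmerge (var 0) (var 1))),
    (lmerge nil (var 0), nil),
    (lmerge (plus (var 0) (var 1)) (var 2),
      plus (lmerge (var 0) (var 2)) (lmerge (var 1) (var 2))),
    (cmerge nil (var 0), nil),
    (cmerge (var 0) nil, nil),
    (cmerge (plus (var 0) (var 1)) (var 2),
      plus (cmerge (var 0) (var 2)) (cmerge (var 1) (var 2))),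
    (cmerge (var 0) (plus (var 1) (var 2)),
      plus (cmerge (var 0) (var 1)) (cmerge (var 0) (var 2))) }

def lmergePreAxiom (μ : Act A) : Eqn A :=
  (lmerge (pre μ (var 0)) (var 1), pre μ (par (var 0) (var 1)))

open scoped Classical in
noncomputable def cmergePreAxiom (μ ν : Act A) : Eqn A :=
  (cmerge (pre μ (var 0)) (pre ν (var 1)),
    if μ ≠ .tau ∧ ν = μ.co then pre .tau (par (var 0) (var 1)) else nil)

variable (A) in
noncomputable def bkAxioms : Set (Eqn A) :=
  baseAxioms A ∪ Set.range lmergePreAxiom ∪ Set.range (Function.uncurry cmergePreAxiom)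

theorem baseAxioms_finite : (baseAxioms A).Finite := by
  simp [baseAxioms]

theorem bkAxioms_finite [Finite A] : (bkAxioms A).Finite :=
  (baseAxioms_finite.union (Set.finite_range _)).union (Set.finite_range _)

theorem bkAxioms_sound : SystemSound Bisim (bkAxioms A) := by
  rintro ⟨l, r⟩ ((he | ⟨μ, ⟨⟩⟩) | ⟨⟨μ, ν⟩, ⟨⟩⟩) σ -
  · simp only [baseAxioms, Set.mem_insert_iff, Set.mem_singleton_iff, Prod.mk.injEq] at he
    rcases he with ⟨rfl, rfl⟩ | ⟨rfl, rfl⟩ | ⟨rfl, rfl⟩ | ⟨rfl, rfl⟩ | ⟨rfl, rfl⟩ | ⟨rfl, rfl⟩ |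
      ⟨rfl, rfl⟩ | ⟨rfl, rfl⟩ | ⟨rfl, rfl⟩ | ⟨rfl, rfl⟩ | ⟨rfl, rfl⟩ <;>
    first
      | exact bisim_par_expand _ _
      | exact bisim_of_step_iff fun κ p => by
          simp only [subst, step_plus_iff, step_lmerge_iff, step_cmerge_iff, not_step_nil]
          aesop
  · exact bisim_of_step_iff fun κ p => by
      simp only [subst, step_lmerge_iff, step_pre_iff]
      aesop
  · refine bisim_of_step_iff fun κ p => ?_
    split_ifs <;> simp only [subst, step_cmerge_iff, step_pre_iff, not_step_nil] <;> aesop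

abbrev BKEq (p q : Tm A) : Prop := Deriv (bkAxioms A) p q

def substOfList (l : List (Tm A)) (n : ℕ) : Tm A := l.getD n nil

theorem BKEq.of_base {t u : Tm A} (h : (t, u) ∈ baseAxioms A) (σ : ℕ → Tm A) :
    BKEq (subst σ t) (subst σ u) :=
  .ax σ (.inl (.inl h))

namespace BKEq

theorem plus_comm (a b : Tm A) : BKEq (plus a b) (plus b a) :=
  of_base (t := plus (var 0) (var 1)) (u := plus (var 1) (var 0)) (by simp [baseAxioms])
    (substOfList [a, b])

theorem plus_assoc (a b c : Tm A) : BKEq (plus (plus a b) c) (plus a (plus b c)) :=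
  of_base (t := plus (plus (var 0) (var 1)) (var 2)) (u := plus (var 0) (plus (var 1) (var 2)))
    (by simp [baseAxioms]) (substOfList [a, b, c])

theorem plus_idem (a : Tm A) : BKEq (plus a a) a :=
  of_base (t := plus (var 0) (var 0)) (u := var 0) (by simp [baseAxioms]) (substOfList [a])

theorem plus_nil (a : Tm A) : BKEq (plus a nil) a :=
  of_base (t := plus (var 0) nil) (u := var 0) (by simp [baseAxioms]) (substOfList [a])

theorem nil_plus (a : Tm A) : BKEq (plus nil a) a :=
  (plus_comm nil a).trans (plus_nil a)

theorem par_expand (a b : Tm A) :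
    BKEq (par a b) (plus (plus (lmerge a b) (lmerge b a)) (cmerge a b)) :=
  of_base (t := par (var 0) (var 1))
    (u := plus (plus (lmerge (var 0) (var 1)) (lmerge (var 1) (var 0))) (cmerge (var 0) (var 1)))
    (by simp [baseAxioms]) (substOfList [a, b])

theorem nil_lmerge (a : Tm A) : BKEq (lmerge nil a) nil :=
  of_base (t := lmerge nil (var 0)) (u := nil) (by simp [baseAxioms]) (substOfList [a])

theorem plus_lmerge (a b c : Tm A) :
    BKEq (lmerge (plus a b) c) (plus (lmerge a c) (lmerge b c)) :=
  of_base (t := lmerge (plus (var 0) (var 1)) (var 2))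
    (u := plus (lmerge (var 0) (var 2)) (lmerge (var 1) (var 2)))
    (by simp [baseAxioms]) (substOfList [a, b, c])

theorem pre_lmerge (μ : Act A) (a b : Tm A) : BKEq (lmerge (pre μ a) b) (pre μ (par a b)) :=
  .ax (t := lmerge (pre μ (var 0)) (var 1)) (u := pre μ (par (var 0) (var 1)))
    (substOfList [a, b]) (Or.inl (Or.inr ⟨μ, rfl⟩))

theorem nil_cmerge (a : Tm A) : BKEq (cmerge nil a) nil :=
  of_base (t := cmerge nil (var 0)) (u := nil) (by simp [baseAxioms]) (substOfList [a])

theorem cmerge_nil (a : Tm A) : BKEq (cmerge a nil) nil :=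
  of_base (t := cmerge (var 0) nil) (u := nil) (by simp [baseAxioms]) (substOfList [a])

theorem plus_cmerge (a b c : Tm A) :
    BKEq (cmerge (plus a b) c) (plus (cmerge a c) (cmerge b c)) :=
  of_base (t := cmerge (plus (var 0) (var 1)) (var 2))
    (u := plus (cmerge (var 0) (var 2)) (cmerge (var 1) (var 2)))
    (by simp [baseAxioms]) (substOfList [a, b, c])

theorem cmerge_plus (a b c : Tm A) :
    BKEq (cmerge a (plus b c)) (plus (cmerge a b) (cmerge a c)) :=
  of_base (t := cmerge (var 0) (plus (var 1) (var 2)))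
    (u := plus (cmerge (var 0) (var 1)) (cmerge (var 0) (var 2)))
    (by simp [baseAxioms]) (substOfList [a, b, c])

open scoped Classical in
theorem pre_cmerge_pre (μ ν : Act A) (a b : Tm A) :
    BKEq (cmerge (pre μ a) (pre ν b))
      (if μ ≠ .tau ∧ ν = μ.co then pre .tau (par a b) else nil) := by
  have := Deriv.ax (E := bkAxioms A) (t := (cmergePreAxiom μ ν).1) (u := (cmergePreAxiom μ ν).2)
    (substOfList [a, b]) (Or.inr (Set.mem_range_self (μ, ν)))
  simp only [cmergePreAxiom] at this
  split_ifs at this ⊢ <;> exact this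

end BKEq

def sumOf : List (Act A × Tm A) → Tm A
  | [] => nil
  | (μ, t) :: l => plus (pre μ t) (sumOf l)

def lmergeSummands (l : List (Act A × Tm A)) (u : Tm A) : List (Act A × Tm A) :=
  l.map fun e => (e.1, par e.2 u)

open scoped Classical in
noncomputable def commSummands : Act A × Tm A → Act A × Tm A → List (Act A × Tm A)
  | (μ, s), (ν, u) => if μ ≠ .tau ∧ ν = μ.co then [(.tau, par s u)] else []

noncomputable def cmergeSummands (l m : List (Act A × Tm A)) : List (Act A × Tm A) :=
  l.flatMap fun e => m.flatMap (commSummands e)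

theorem step_sumOf_iff {l : List (Act A × Tm A)} {μ : Act A} {p : Tm A} :
    Step (sumOf l) μ p ↔ (μ, p) ∈ l := by
  induction l with
  | nil => simp [sumOf, not_step_nil]
  | cons e l ih =>
    obtain ⟨ν, t⟩ := e
    simp [sumOf, step_plus_iff, step_pre_iff, ih]

theorem mem_lmergeSummands {l : List (Act A × Tm A)} {u : Tm A} {μ : Act A} {v : Tm A} :
    (μ, v) ∈ lmergeSummands l u ↔ ∃ s, (μ, s) ∈ l ∧ v = par s u := by
  simp [lmergeSummands, eq_comm]

theorem mem_cmergeSummands {l m : List (Act A × Tm A)} {κ : Act A} {v : Tm A} :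
    (κ, v) ∈ cmergeSummands l m ↔
      κ = .tau ∧ ∃ α s u, α ≠ .tau ∧ (α, s) ∈ l ∧ (α.co, u) ∈ m ∧ v = par s u := by
  simp only [cmergeSummands, commSummands, List.mem_flatMap]
  aesop

namespace BKEq

theorem sumOf_append (l m : List (Act A × Tm A)) :
    BKEq (plus (sumOf l) (sumOf m)) (sumOf (l ++ m)) := by
  induction l with
  | nil => exact nil_plus _
  | cons e l ih => exact (plus_assoc _ _ _).trans (.plus (.refl _) ih)

theorem plus_sumOf {t u : Tm A} {l m : List (Act A × Tm A)} (ht : BKEq t (sumOf l))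
    (hu : BKEq u (sumOf m)) : BKEq (plus t u) (sumOf (l ++ m)) :=
  (Deriv.plus ht hu).trans (sumOf_append l m)

theorem lmerge_sumOf {t : Tm A} {l : List (Act A × Tm A)} (ht : BKEq t (sumOf l)) (u : Tm A) :
    BKEq (lmerge t u) (sumOf (lmergeSummands l u)) := by
  refine (Deriv.lmerge ht (.refl u)).trans ?_
  clear ht
  induction l with
  | nil => exact nil_lmerge u
  | cons e l ih => exact (plus_lmerge _ _ _).trans (.plus (pre_lmerge _ _ _) ih)

theorem pre_cmerge_sumOf (e : Act A × Tm A) (m : List (Act A × Tm A)) :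
    BKEq (cmerge (pre e.1 e.2) (sumOf m)) (sumOf (m.flatMap (commSummands e))) := by
  classical
  induction m with
  | nil => exact cmerge_nil _
  | cons f m ih =>
    refine (cmerge_plus _ _ _).trans ((Deriv.plus ?_ ih).trans (sumOf_append _ _))
    refine (pre_cmerge_pre _ _ _ _).trans ?_
    simp only [commSummands]
    split_ifs
    exacts [(plus_nil _).symm, .refl _]

theorem cmerge_sumOf {t u : Tm A} {l m : List (Act A × Tm A)} (ht : BKEq t (sumOf l))
    (hu : BKEq u (sumOf m)) : BKEq (cmerge t u) (sumOf (cmergeSummands l m)) := by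
  refine (Deriv.cmerge ht hu).trans ?_
  clear ht
  induction l with
  | nil => exact nil_cmerge _
  | cons e l ih =>
    exact (plus_cmerge _ _ _).trans ((Deriv.plus (pre_cmerge_sumOf e m) ih).trans
      (sumOf_append _ _))

theorem sumOf_plus_pre_of_mem {μ : Act A} {s : Tm A} {l : List (Act A × Tm A)}
    (h : (μ, s) ∈ l) : BKEq (plus (sumOf l) (pre μ s)) (sumOf l) := by
  induction l with
  | nil => cases h
  | cons e l ih =>
    refine (plus_assoc _ _ _).trans ?_
    rcases List.mem_cons.mp h with rfl | h
    · exact (Deriv.plus (.refl _) (plus_comm _ _)).trans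
        ((plus_assoc _ _ _).symm.trans (.plus (plus_idem _) (.refl _)))
    · exact .plus (.refl _) (ih h)

theorem sumOf_plus_sumOf {l m : List (Act A × Tm A)}
    (h : ∀ μ s', (μ, s') ∈ m → ∃ s, (μ, s) ∈ l ∧ BKEq s s') :
    BKEq (plus (sumOf l) (sumOf m)) (sumOf l) := by
  induction m with
  | nil => exact plus_nil _
  | cons e m ih =>
    obtain ⟨s, hs, hss'⟩ := h e.1 e.2 List.mem_cons_self
    refine (plus_assoc _ _ _).symm.trans ((Deriv.plus ?_ (.refl _)).trans
      (ih fun μ s' hs' => h μ s' (List.mem_cons_of_mem _ hs')))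
    exact (Deriv.plus (.refl _) (.pre _ hss'.symm)).trans (sumOf_plus_pre_of_mem hs)

theorem sumOf_of_forall {l m : List (Act A × Tm A)}
    (hlm : ∀ μ s, (μ, s) ∈ l → ∃ s', (μ, s') ∈ m ∧ BKEq s s')
    (hml : ∀ μ s', (μ, s') ∈ m → ∃ s, (μ, s) ∈ l ∧ BKEq s s') :
    BKEq (sumOf l) (sumOf m) := by
  refine (sumOf_plus_sumOf hml).symm.trans ((plus_comm _ _).trans (sumOf_plus_sumOf ?_))
  intro μ s hs
  obtain ⟨s', hs', h⟩ := hlm μ s hs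
  exact ⟨s', hs', h.symm⟩

end BKEq

theorem bisim_sumOf_iff {t : Tm A} {l : List (Act A × Tm A)} :
    Bisim t (sumOf l) ↔ (∀ μ t', Step t μ t' → ∃ s, (μ, s) ∈ l ∧ Bisim t' s) ∧
      (∀ μ s, (μ, s) ∈ l → ∃ t', Step t μ t' ∧ Bisim t' s) := by
  rw [bisim_iff]
  simp only [step_sumOf_iff]

theorem Bisim.plus_sumOf {t u : Tm A} {l m : List (Act A × Tm A)} (ht : Bisim t (sumOf l))
    (hu : Bisim u (sumOf m)) : Bisim (plus t u) (sumOf (l ++ m)) := by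
  obtain ⟨ht₁, ht₂⟩ := bisim_sumOf_iff.mp ht
  obtain ⟨hu₁, hu₂⟩ := bisim_sumOf_iff.mp hu
  refine bisim_sumOf_iff.mpr ⟨fun μ p hp => ?_, fun μ s hs => ?_⟩
  · rcases step_plus_iff.mp hp with hp | hp
    · obtain ⟨s, hs, h⟩ := ht₁ μ p hp
      exact ⟨s, List.mem_append_left _ hs, h⟩
    · obtain ⟨s, hs, h⟩ := hu₁ μ p hp
      exact ⟨s, List.mem_append_right _ hs, h⟩
  · rcases List.mem_append.mp hs with hs | hs
    · obtain ⟨p, hp, h⟩ := ht₂ μ s hs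
      exact ⟨p, .plusL hp, h⟩
    · obtain ⟨p, hp, h⟩ := hu₂ μ s hs
      exact ⟨p, .plusR hp, h⟩

theorem Bisim.lmerge_sumOf {t : Tm A} {l : List (Act A × Tm A)} (ht : Bisim t (sumOf l))
    (u : Tm A) : Bisim (lmerge t u) (sumOf (lmergeSummands l u)) := by
  obtain ⟨ht₁, ht₂⟩ := bisim_sumOf_iff.mp ht
  refine bisim_sumOf_iff.mpr ⟨fun μ p hp => ?_, fun μ v hv => ?_⟩
  · obtain ⟨t', ht', rfl⟩ := step_lmerge_iff.mp hp
    obtain ⟨s, hs, h⟩ := ht₁ μ t' ht'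
    exact ⟨Tm.par s u, mem_lmergeSummands.mpr ⟨s, hs, rfl⟩, h.par (.refl u)⟩
  · obtain ⟨s, hs, rfl⟩ := mem_lmergeSummands.mp hv
    obtain ⟨t', ht', h⟩ := ht₂ μ s hs
    exact ⟨Tm.par t' u, .lmerge ht', h.par (.refl u)⟩

theorem Bisim.cmerge_sumOf {t u : Tm A} {l m : List (Act A × Tm A)} (ht : Bisim t (sumOf l))
    (hu : Bisim u (sumOf m)) : Bisim (cmerge t u) (sumOf (cmergeSummands l m)) := by
  obtain ⟨ht₁, ht₂⟩ := bisim_sumOf_iff.mp ht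
  obtain ⟨hu₁, hu₂⟩ := bisim_sumOf_iff.mp hu
  refine bisim_sumOf_iff.mpr ⟨fun μ p hp => ?_, fun μ v hv => ?_⟩
  · obtain ⟨rfl, α, t', u', hα, ht', hu', rfl⟩ := step_cmerge_iff.mp hp
    obtain ⟨s, hs, hts⟩ := ht₁ α t' ht'
    obtain ⟨w, hw, huw⟩ := hu₁ α.co u' hu'
    exact ⟨Tm.par s w, mem_cmergeSummands.mpr ⟨rfl, α, s, w, hα, hs, hw, rfl⟩, hts.par huw⟩
  · obtain ⟨rfl, α, s, w, hα, hs, hw, rfl⟩ := mem_cmergeSummands.mp hv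
    obtain ⟨t', ht', hts⟩ := ht₂ α s hs
    obtain ⟨u', hu', huw⟩ := hu₂ α.co w hw
    exact ⟨Tm.par t' u', .cmerge hα ht' hu', hts.par huw⟩

noncomputable def summands : Tm A → List (Act A × Tm A)
  | nil | var _ => []
  | pre μ t => [(μ, t)]
  | plus t u => summands t ++ summands u
  | par t u => lmergeSummands (summands t) u ++ lmergeSummands (summands u) t ++
      cmergeSummands (summands t) (summands u)
  | lmerge t u => lmergeSummands (summands t) u
  | cmerge t u => cmergeSummands (summands t) (summands u)

theorem bisim_sumOf_summands (p : Tm A) : Bisim p (sumOf (summands p)) := by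
  induction p with
  | nil => exact bisim_of_step_iff fun _ _ => by simp [summands, sumOf, not_step_nil]
  | var => exact bisim_of_step_iff fun _ _ => by simp [summands, sumOf, not_step_nil, not_step_var]
  | pre =>
    exact bisim_of_step_iff fun _ _ => by simp [summands, sumOf, step_plus_iff, not_step_nil]
  | plus _ _ iht ihu => exact iht.plus_sumOf ihu
  | par t u iht ihu =>
    exact (bisim_par_expand t u).trans
      (((iht.lmerge_sumOf u).plus_sumOf (ihu.lmerge_sumOf t)).plus_sumOf (iht.cmerge_sumOf ihu))
  | lmerge _ u iht _ => exact iht.lmerge_sumOf u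
  | cmerge _ _ iht ihu => exact iht.cmerge_sumOf ihu

theorem BKEq.summands {p : Tm A} (hp : Closed p) : BKEq p (sumOf (summands p)) := by
  induction p with
  | nil => exact .refl _
  | var => exact hp.elim
  | pre => exact (plus_nil _).symm
  | plus _ _ iht ihu => exact plus_sumOf (iht hp.1) (ihu hp.2)
  | par t u iht ihu =>
    exact (par_expand t u).trans (plus_sumOf
      (plus_sumOf (lmerge_sumOf (iht hp.1) u) (lmerge_sumOf (ihu hp.2) t))
      (cmerge_sumOf (iht hp.1) (ihu hp.2)))
  | lmerge _ u iht _ => exact lmerge_sumOf (iht hp.1) u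
  | cmerge _ _ iht ihu => exact cmerge_sumOf (iht hp.1) (ihu hp.2)

def depth : Tm A → ℕ
  | nil | var _ => 0
  | pre _ t => depth t + 1
  | plus t u => max (depth t) (depth u)
  | par t u | lmerge t u | cmerge t u => depth t + depth u

theorem closed_of_mem_summands {p s : Tm A} {μ : Act A} (hp : Closed p)
    (h : (μ, s) ∈ summands p) : Closed s := by
  induction p generalizing μ s <;>
    simp only [summands, List.mem_append, mem_lmergeSummands, mem_cmergeSummands,
      List.mem_cons, List.not_mem_nil, Prod.mk.injEq] at h <;> simp only [Closed] at hp
  all_goals aesop (add norm simp Closed)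

theorem depth_lt_of_mem_summands {p s : Tm A} {μ : Act A} (h : (μ, s) ∈ summands p) :
    depth s < depth p := by
  induction p generalizing μ s with
  | nil | var => simp [summands] at h
  | pre => simp_all [summands, depth]
  | plus t u iht ihu =>
    rcases List.mem_append.mp h with h | h
    · exact (iht h).trans_le (le_max_left _ _)
    · exact (ihu h).trans_le (le_max_right _ _)
  | par t u iht ihu =>
    simp only [summands, List.mem_append, mem_lmergeSummands, mem_cmergeSummands] at h
    rcases h with (⟨s, hs, rfl⟩ | ⟨s, hs, rfl⟩) | ⟨-, α, s, w, -, hs, hw, rfl⟩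
    · exact Nat.add_lt_add_right (iht hs) _
    · exact (Nat.add_comm _ _).trans_lt (Nat.add_lt_add_left (ihu hs) _)
    · exact Nat.add_lt_add (iht hs) (ihu hw)
  | lmerge t u iht =>
    obtain ⟨s, hs, rfl⟩ := mem_lmergeSummands.mp h
    exact Nat.add_lt_add_right (iht hs) _
  | cmerge t u iht ihu =>
    obtain ⟨-, α, s, w, -, hs, hw, rfl⟩ := mem_cmergeSummands.mp h
    exact Nat.add_lt_add (iht hs) (ihu hw)

theorem bkAxioms_groundComplete : GroundComplete Bisim (bkAxioms A) := by
  intro p q hp hq hpq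
  induction hd : depth p using Nat.strong_induction_on generalizing p q with
  | _ n ih =>
  have hsum : Bisim (sumOf (summands p)) (sumOf (summands q)) :=
    (bisim_sumOf_summands p).symm.trans (hpq.trans (bisim_sumOf_summands q))
  obtain ⟨hpq', hqp'⟩ := bisim_iff.mp hsum
  simp only [step_sumOf_iff] at hpq' hqp'
  have ih' {μ : Act A} {s s' : Tm A} (hs : (μ, s) ∈ summands p) (hs' : (μ, s') ∈ summands q)
      (h : Bisim s s') : BKEq s s' :=
    ih _ (hd ▸ depth_lt_of_mem_summands hs) s s' (closed_of_mem_summands hp hs)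
      (closed_of_mem_summands hq hs') h rfl
  refine (BKEq.summands hp).trans (.trans ?_ (BKEq.summands hq).symm)
  refine BKEq.sumOf_of_forall (fun μ s hs => ?_) fun μ s' hs' => ?_
  · obtain ⟨s', hs', h⟩ := hpq' μ s hs
    exact ⟨s', hs', ih' hs hs' h⟩
  · obtain ⟨s, hs, h⟩ := hqp' μ s' hs'
    exact ⟨s, hs, ih' hs hs' h⟩

end

/-- **Bergstra–Klop theorem**: if the set `A` of action names is finite, then there is a
finite axiom system over CCS extended with left merge and communication merge that is
sound and ground-complete modulo bisimilarity. -/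
theorem stmt_4 (A : Type) [Finite A] :
    ∃ E : Set (Eqn A), E.Finite ∧ SystemSound Bisim E ∧ GroundComplete Bisim E :=
  ⟨bkAxioms A, bkAxioms_finite, bkAxioms_sound, bkAxioms_groundComplete⟩
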